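/- There exist a network G, a request R, and an integral pair (x,f) with x : S → {0,1} and f : E_ext → ℕ satisfying all constraints of IP-A-CVSAP except the connectivity inequalities (IP-2) and the directed Steiner cuts (IP-3) — namely (IP-1) and (IP-4) through (IP-9) — such that for some terminal t ∈ T there is no directed path from t to the super sink o⁻_r in the support graph G^f_ext. Hence the flow formulation without the connectivity inequalities (as in the FSCPP formulation of Oliveira and Pardalos) does not guarantee that every terminal is connected to the root. -/

import Mathlib

/-! Formalization of the Constrained Virtual Steiner Arborescence Problem (CVSAP),
its single-commodity flow IP formulation, and related notions. -/

/-- Vertices of the extended graph: original vertices plus super source `src`,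
super sink `sinkS` for Steiner nodes and super sink `sinkR` for the root. -/
inductive ExtV (V : Type) where
  | orig : V → ExtV V
  | src : ExtV V
  | sinkS : ExtV V
  | sinkR : ExtV V
deriving DecidableEq

open ExtV

/-- A (finite) capacitated directed network. -/
structure Network (V : Type) [DecidableEq V] where
  E : Finset (V × V)
  uE : V × V → ℕ
  cE : V × V → ℝ

/-- A request `R = (root, S, T, u_r, c_S, u_S)`. -/
structure Request (V : Type) [DecidableEq V] where
  root : V
  S : Finset V
  T : Finset V
  ur : ℕ
  cS : V → ℝ
  uS : V → ℕ

variable {V : Type} [DecidableEq V]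

/-- Well-formedness: root is neither terminal nor Steiner site, Steiner sites and terminals
are disjoint, and all costs are positive. -/
def RequestWF (N : Network V) (R : Request V) : Prop :=
  R.root ∉ R.T ∧ R.root ∉ R.S ∧ Disjoint R.S R.T ∧
    (∀ s ∈ R.S, 0 < R.cS s) ∧ (∀ e ∈ N.E, 0 < N.cE e)

/-- Edge set of the extended graph `G_ext`. -/
def Eext (N : Network V) (R : Request V) : Finset (ExtV V × ExtV V) :=
  (N.E.image fun e => (orig e.1, orig e.2)) ∪
    ({(orig R.root, sinkR)} : Finset (ExtV V × ExtV V)) ∪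
    (R.S.image fun s => (orig s, sinkS)) ∪
    (R.S.image fun s => (src, orig s)) ∪
    (R.T.image fun t => (src, orig t))

/-- `E_R`: the extended edges without the edges into the Steiner super sink. -/
def ERext (N : Network V) (R : Request V) : Finset (ExtV V × ExtV V) :=
  (Eext N R).filter fun e => e.2 ≠ sinkS

/-- Edges of `F` leaving node `v`. -/
def outV (F : Finset (ExtV V × ExtV V)) (v : ExtV V) : Finset (ExtV V × ExtV V) :=
  F.filter fun e => e.1 = v

/-- Edges of `F` entering node `v`. -/
def inV (F : Finset (ExtV V × ExtV V)) (v : ExtV V) : Finset (ExtV V × ExtV V) :=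
  F.filter fun e => e.2 = v

/-- Edges of `F` leaving the node set `W`. -/
def outSet (F : Finset (ExtV V × ExtV V)) (W : Finset (ExtV V)) : Finset (ExtV V × ExtV V) :=
  F.filter fun e => e.1 ∈ W ∧ e.2 ∉ W

/-- Total flow of `f` on the edge set `F`. -/
def fSum (f : ExtV V × ExtV V → ℕ) (F : Finset (ExtV V × ExtV V)) : ℕ :=
  ∑ e ∈ F, f e

/-- Embedding of a set of original nodes into the extended graph. -/
def extW (W : Finset V) : Finset (ExtV V) := W.image orig

/-- A walk in the support graph `G^f_ext`: consecutive nodes are joined by extended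
edges carrying positive flow. -/
def IsSupportWalk (N : Network V) (R : Request V) (f : ExtV V × ExtV V → ℕ)
    (p : List (ExtV V)) : Prop :=
  p.Chain' fun a b => (a, b) ∈ Eext N R ∧ 1 ≤ f (a, b)

/-- (IP-1): flow conservation at all original nodes. -/
def IP1 (N : Network V) (R : Request V) (f : ExtV V × ExtV V → ℕ) : Prop :=
  ∀ v : V, fSum f (outV (Eext N R) (orig v)) = fSum f (inV (Eext N R) (orig v))

/-- (IP-2): connectivity inequalities for activated Steiner sites. -/
def IP2 (N : Network V) (R : Request V) (x : V → ℕ) (f : ExtV V × ExtV V → ℕ) : Prop :=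
  ∀ W : Finset V, ∀ s ∈ W, s ∈ R.S → x s ≤ fSum f (outSet (ERext N R) (extW W))

/-- (IP-3): directed Steiner cuts for terminals. -/
def IP3 (N : Network V) (R : Request V) (f : ExtV V × ExtV V → ℕ) : Prop :=
  ∀ W : Finset V, (W ∩ R.T).Nonempty → 1 ≤ fSum f (outSet (ERext N R) (extW W))

/-- Feasibility for the integer program IP-A-CVSAP. -/
def IPFeasible (N : Network V) (R : Request V) (x : V → ℕ) (f : ExtV V × ExtV V → ℕ) : Prop :=
  (∀ s ∈ R.S, x s ≤ 1) ∧
  IP1 N R f ∧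
  IP2 N R x f ∧
  IP3 N R f ∧
  (∀ s ∈ R.S, x s ≤ f (orig s, sinkS)) ∧
  (∀ s ∈ R.S, f (orig s, sinkS) ≤ R.uS s * x s) ∧
  f (orig R.root, sinkR) ≤ R.ur ∧
  (∀ e ∈ N.E, f (orig e.1, orig e.2) ≤ N.uE e) ∧
  (∀ t ∈ R.T, f (src, orig t) = 1) ∧
  (∀ s ∈ R.S, f (src, orig s) = x s)

/-- Objective value of IP-A-CVSAP. -/
noncomputable def costIP (N : Network V) (R : Request V) (x : V → ℕ)
    (f : ExtV V × ExtV V → ℕ) : ℝ :=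
  ∑ e ∈ N.E, N.cE e * f (orig e.1, orig e.2) + ∑ s ∈ R.S, R.cS s * x s

/-- A Virtual Arborescence: nodes, virtual edges and the mapping of virtual edges
onto paths in the underlying graph. -/
structure VirtArb (V : Type) where
  VT : Finset V
  ET : Finset (V × V)
  pi : V × V → List V

/-- `p` is a simple directed path in `N` from `u` to `v`. -/
def IsPathInG (N : Network V) (p : List V) (u v : V) : Prop :=
  p.Chain' (fun a b => (a, b) ∈ N.E) ∧ p.head? = some u ∧ p.getLast? = some v ∧ p.Nodup

/-- The virtual edges whose path uses the edge `e` of the underlying graph. -/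
def pathUses (TA : VirtArb V) (e : V × V) : Finset (V × V) :=
  TA.ET.filter fun d => e ∈ (TA.pi d).zip (TA.pi d).tail

/-- `|π(E_T)[e]|`: the number of paths of the virtual arborescence using edge `e`. -/
def pathCount (TA : VirtArb V) (e : V × V) : ℕ := (pathUses TA e).card

/-- Total degree of node `v` with respect to the virtual edge set `ET`. -/
def degTotal (ET : Finset (V × V)) (v : V) : ℕ :=
  (ET.filter fun e => e.1 = v).card + (ET.filter fun e => e.2 = v).card

/-- `(VT, ET, r)` is an arborescence rooted at `r` with all edges oriented towards `r`. -/
def ArborTowards (VT : Finset V) (ET : Finset (V × V)) (r : V) : Prop :=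
  (∀ e ∈ ET, e.1 ∈ VT ∧ e.2 ∈ VT ∧ e.1 ≠ e.2) ∧
  (∀ v ∈ VT, v ≠ r → (ET.filter fun e => e.1 = v).card = 1) ∧
  (∀ e ∈ ET, e.1 ≠ r) ∧
  (∀ v ∈ VT, ∃ p : List V, p.Chain' (fun a b => (a, b) ∈ ET) ∧
      p.head? = some v ∧ p.getLast? = some r)

/-- `(VT, ET, r)` is an arborescence rooted at `r` with all edges oriented away from `r`. -/
def ArborAway (VT : Finset V) (ET : Finset (V × V)) (r : V) : Prop :=
  (∀ e ∈ ET, e.1 ∈ VT ∧ e.2 ∈ VT ∧ e.1 ≠ e.2) ∧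
  (∀ v ∈ VT, v ≠ r → (ET.filter fun e => e.2 = v).card = 1) ∧
  (∀ e ∈ ET, e.2 ≠ r) ∧
  (∀ v ∈ VT, ∃ p : List V, p.Chain' (fun a b => (a, b) ∈ ET) ∧
      p.head? = some r ∧ p.getLast? = some v)

/-- Feasible solutions of A-CVSAP: all arborescence edges oriented towards the root. -/
def FeasibleACVSAP (N : Network V) (R : Request V) (TA : VirtArb V) : Prop :=
  R.root ∈ TA.VT ∧
  ArborTowards TA.VT TA.ET R.root ∧
  (∀ d ∈ TA.ET, IsPathInG N (TA.pi d) d.1 d.2) ∧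
  R.T ⊆ TA.VT ∧
  TA.VT ⊆ insert R.root (R.S ∪ R.T) ∧
  (∀ t ∈ R.T, degTotal TA.ET t = 1) ∧
  degTotal TA.ET R.root ≤ R.ur ∧
  (∀ s ∈ R.S, s ∈ TA.VT → degTotal TA.ET s ≤ R.uS s + 1) ∧
  (∀ e ∈ N.E, pathCount TA e ≤ N.uE e)

/-- Feasible solutions of M-CVSAP: all arborescence edges oriented away from the root. -/
def FeasibleMCVSAP (N : Network V) (R : Request V) (TA : VirtArb V) : Prop :=
  R.root ∈ TA.VT ∧
  ArborAway TA.VT TA.ET R.root ∧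
  (∀ d ∈ TA.ET, IsPathInG N (TA.pi d) d.1 d.2) ∧
  R.T ⊆ TA.VT ∧
  TA.VT ⊆ insert R.root (R.S ∪ R.T) ∧
  (∀ t ∈ R.T, degTotal TA.ET t = 1) ∧
  degTotal TA.ET R.root ≤ R.ur ∧
  (∀ s ∈ R.S, s ∈ TA.VT → degTotal TA.ET s ≤ R.uS s + 1) ∧
  (∀ e ∈ N.E, pathCount TA e ≤ N.uE e)

/-- Cost of a virtual arborescence. -/
noncomputable def costCVSAP (N : Network V) (R : Request V) (TA : VirtArb V) : ℝ :=
  ∑ e ∈ N.E, N.cE e * pathCount TA e + ∑ s ∈ R.S.filter (· ∈ TA.VT), R.cS s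

/-! ### Statement 13: without the connectivity inequalities (IP-2) and the directed
Steiner cuts (IP-3), the flow formulation does not guarantee connectivity. -/

/-! The flow of a terminal may end in the Steiner super sink instead of the root's: in the
network with the single edge `1 → 2`, terminal `1` routes its unit of flow to the activated
Steiner site `2`, which has capacity `2` and so absorbs it together with its own unit. The
root `0` then carries no flow, and since `(r, o⁻_r)` is the only edge into `o⁻_r`, no
flow-carrying path reaches `o⁻_r`. -/

theorem List.IsChain.exists_rel_of_head?_ne_getLast? {α : Type*} {R : α → α → Prop}
    {l : List α} {a b : α} (h : l.IsChain R) (ha : l.head? = some a)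
    (hb : l.getLast? = some b) (hab : a ≠ b) : ∃ y, R y b := by
  match l, h with
  | [], _ => simp at ha
  | [_], _ => simp_all
  | _ :: _ :: _, h =>
    rw [List.getLast?_eq_getLast (by simp), Option.some_inj] at hb
    exact ⟨_, hb ▸ h.rel_getLast_dropLast (by simp)⟩

theorem mem_Eext_sinkR_iff {N : Network V} {R : Request V} {y : ExtV V} :
    (y, sinkR) ∈ Eext N R ↔ y = orig R.root := by
  simp [Eext]

theorem IsSupportWalk.getLast?_ne_sinkR {N : Network V} {R : Request V}
    {f : ExtV V × ExtV V → ℕ} (hroot : f (orig R.root, sinkR) = 0) {p : List (ExtV V)}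
    (hp : IsSupportWalk N R f p) {v : ExtV V} (hhead : p.head? = some v) (hv : v ≠ sinkR) :
    p.getLast? ≠ some sinkR := by
  intro hlast
  obtain ⟨y, hy, hflow⟩ := hp.exists_rel_of_head?_ne_getLast? hhead hlast hv
  rw [mem_Eext_sinkR_iff.mp hy, hroot] at hflow
  exact absurd hflow (by decide)

namespace FSCPPCounterexample

def network : Network (Fin 4) := ⟨{(1, 2)}, fun _ => 1, fun _ => 1⟩

def request : Request (Fin 4) := ⟨0, {2}, {1}, 0, fun _ => 1, fun _ => 2⟩

def flow : ExtV (Fin 4) × ExtV (Fin 4) → ℕ := fun e =>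
  if e = (src, orig 1) then 1
  else if e = (src, orig 2) then 1
  else if e = (orig 1, orig 2) then 1
  else if e = (orig 2, sinkS) then 2
  else 0

theorem flow_eq_zero_of_not_mem_Eext : ∀ e ∉ Eext network request, flow e = 0 := by
  intro e he
  unfold flow
  split_ifs <;> subst_vars <;> first | rfl | exact absurd (by decide) he

end FSCPPCounterexample

open FSCPPCounterexample in
theorem fscpp_formulation_flawed :
    ∃ (N : Network (Fin 4)) (R : Request (Fin 4)) (x : Fin 4 → ℕ)
      (f : ExtV (Fin 4) × ExtV (Fin 4) → ℕ),
      RequestWF N R ∧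
      (∀ e ∉ Eext N R, f e = 0) ∧
      (∀ s ∈ R.S, x s ≤ 1) ∧
      -- (IP-1)
      IP1 N R f ∧
      -- (IP-4)
      (∀ s ∈ R.S, x s ≤ f (ExtV.orig s, ExtV.sinkS)) ∧
      -- (IP-5)
      (∀ s ∈ R.S, f (ExtV.orig s, ExtV.sinkS) ≤ R.uS s * x s) ∧
      -- (IP-6)
      f (ExtV.orig R.root, ExtV.sinkR) ≤ R.ur ∧
      -- (IP-7)
      (∀ e ∈ N.E, f (ExtV.orig e.1, ExtV.orig e.2) ≤ N.uE e) ∧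
      -- (IP-8)
      (∀ t ∈ R.T, f (ExtV.src, ExtV.orig t) = 1) ∧
      -- (IP-9)
      (∀ s ∈ R.S, f (ExtV.src, ExtV.orig s) = x s) ∧
      -- some terminal has no flow-carrying path to the root super sink
      (∃ t ∈ R.T, ¬ ∃ p : List (ExtV (Fin 4)),
          IsSupportWalk N R f p ∧ p.head? = some (ExtV.orig t) ∧
          p.getLast? = some ExtV.sinkR) := by
  refine ⟨network, request, fun _ => 1, flow, ⟨by decide, by decide, by decide,
    fun _ _ => one_pos, fun _ _ => one_pos⟩, flow_eq_zero_of_not_mem_Eext, by decide,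
    by unfold IP1 fSum outV inV; decide, by decide, by decide, by decide, by decide, by decide,
    by decide, ⟨1, by decide, ?_⟩⟩
  rintro ⟨p, hp, hhead, hlast⟩
  exact hp.getLast?_ne_sinkR rfl hhead nofun hlast
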